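/- arXiv:2504.03090 — 6 statements merged into one kernel-verified Lean document; each statement's English description precedes it below -/
import Mathlib

section
/- Let G ∈ F_q^{m×n} and H ∈ F_q^{(n−m)×n} be matrices of full row rank with G·Hᵀ = 0, and let g(x) = Gx, h(x) = Hx. For any linear subspace V ⊆ F_q^n with dim V = m: g restricted to V is a bijection onto F_q^m if and only if h restricted to the orthogonal complement V^⊥ is injective. -/
/-!
Let `K = ker G`. Since `G * Hᵀ = 0` and `rank G + rank H = n`, the row space of `H` is exactly
`K`, hence `ker H = K^⊥`. As `dim V + dim K = n`, the map `g` is bijective on `V` iff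
`V ∩ K = 0` iff `V + K = F^n`, and by nondegeneracy of the dot product this happens iff
`(V + K)^⊥ = V^⊥ ∩ K^⊥ = V^⊥ ∩ ker H` is zero, i.e. iff `h` is injective on `V^⊥`.
-/

open Matrix Module
open LinearMap (BilinForm)

namespace LinearMap.BilinForm

variable {R M : Type*} [CommSemiring R] [AddCommMonoid M] [Module R M]

theorem orthogonal_sup (B : BilinForm R M) (N L : Submodule R M) :
    B.orthogonal (N ⊔ L) = B.orthogonal N ⊓ B.orthogonal L := by
  refine le_antisymm (le_inf (orthogonal_le le_sup_left) (orthogonal_le le_sup_right)) ?_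
  rintro y ⟨hyN, hyL⟩ x hx
  obtain ⟨a, ha, b, hb, rfl⟩ := Submodule.mem_sup.mp hx
  rw [map_add, LinearMap.add_apply, hyN a ha, hyL b hb, add_zero]

variable {K V : Type*} [Field K] [AddCommGroup V] [Module K V] [FiniteDimensional K V]

theorem orthogonal_eq_bot_iff_eq_top {B : BilinForm K V} (hB : B.Nondegenerate)
    {W : Submodule K V} : B.orthogonal W = ⊥ ↔ W = ⊤ := by
  rw [← Submodule.finrank_eq_zero, finrank_orthogonal hB, Nat.sub_eq_zero_iff_le]
  exact ⟨Submodule.eq_top_of_finrank_eq ∘ (Submodule.finrank_le W).antisymm,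
    fun h => h ▸ finrank_top K V |>.ge⟩

end LinearMap.BilinForm

namespace Matrix

variable {R ι : Type*} [CommRing R] [Fintype ι]

theorem mem_orthogonal_dotProductBilin_iff {V : Submodule R (ι → R)} {y : ι → R} :
    y ∈ BilinForm.orthogonal (dotProductBilin R R) V ↔ ∀ v ∈ V, y ⬝ᵥ v = 0 := by
  simp only [BilinForm.mem_orthogonal_iff, dotProductBilin_apply_apply, dotProduct_comm _ y]

theorem nondegenerate_dotProductBilin :
    (dotProductBilin R R : BilinForm R (ι → R)).Nondegenerate :=
  ⟨fun x hx => dotProduct_eq_zero x hx,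
    fun y hy => dotProduct_eq_zero y fun x => (dotProduct_comm y x).trans (hy x)⟩

theorem ker_mulVecLin_eq_orthogonal_range_transpose {κ : Type*} [Fintype κ]
    (A : Matrix κ ι R) :
    LinearMap.ker A.mulVecLin =
      BilinForm.orthogonal (dotProductBilin R R) (LinearMap.range Aᵀ.mulVecLin) := by
  ext y
  simp only [LinearMap.mem_ker, mulVecLin_apply, BilinForm.mem_orthogonal_iff,
    LinearMap.mem_range, forall_exists_index, forall_apply_eq_imp_iff,
    dotProductBilin_apply_apply, dotProduct_comm (Aᵀ *ᵥ _), dotProduct_mulVec, vecMul_transpose]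
  exact dotProduct_eq_zero_iff.symm

theorem range_mulVecLin_eq_ker_of_mul_eq_zero {K m n p : Type*} [Field K] [Fintype m]
    [Fintype n] [Fintype p] {A : Matrix m n K} {C : Matrix n p K} (hAC : A * C = 0)
    (hrank : A.rank + C.rank = Fintype.card n) :
    LinearMap.range C.mulVecLin = LinearMap.ker A.mulVecLin := by
  refine Submodule.eq_of_le_of_finrank_le ?_ ?_
  · rintro _ ⟨c, rfl⟩
    simp [mulVec_mulVec, hAC]
  · have := A.mulVecLin.finrank_range_add_finrank_ker
    rw [finrank_fintype_fun_eq_card] at this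
    change A.rank + _ = _ at this
    change _ ≤ C.rank
    omega

end Matrix

theorem Submodule.disjoint_iff_codisjoint_of_finrank_add_eq {K V : Type*} [Field K]
    [AddCommGroup V] [Module K V] [FiniteDimensional K V] {s t : Submodule K V}
    (hdim : finrank K s + finrank K t = finrank K V) : Disjoint s t ↔ Codisjoint s t := by
  refine ⟨fun h => ((isCompl_iff_disjoint s t hdim.ge).mpr h).codisjoint, fun h => ?_⟩
  have := finrank_sup_add_finrank_inf_eq s t
  rw [codisjoint_iff.mp h, finrank_top, hdim, Nat.add_eq_left, finrank_eq_zero] at this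
  exact disjoint_iff.mpr this

theorem LinearMap.bijective_domRestrict_iff_disjoint_ker {K V W : Type*} [Field K]
    [AddCommGroup V] [Module K V] [AddCommGroup W] [Module K W] [FiniteDimensional K W]
    (f : V →ₗ[K] W) {S : Submodule K V} [FiniteDimensional K S]
    (hS : finrank K S = finrank K W) :
    Function.Bijective (f.domRestrict S) ↔ Disjoint S (ker f) := by
  rw [← injective_domRestrict_iff]
  exact ⟨And.left, fun h => ⟨h, (injective_iff_surjective_of_finrank_eq_finrank hS).mp h⟩⟩

theorem stmt_5_general (F : Type*) [Field F] (m n : ℕ)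
    (G : Matrix (Fin m) (Fin n) F) (H : Matrix (Fin (n - m)) (Fin n) F)
    (hG : G.rank = m) (hH : H.rank = n - m) (hGH : G * Hᵀ = 0)
    (V : Submodule F (Fin n → F)) (hV : Module.finrank F V = m) :
    Function.Bijective (fun v : V => G.mulVec (v : Fin n → F)) ↔
      Set.InjOn (fun y => H.mulVec y) {y : Fin n → F | ∀ v ∈ V, y ⬝ᵥ v = 0} := by
  set K := LinearMap.ker G.mulVecLin
  have hmn : m ≤ n := hG ▸ G.rank_le_width
  have hrowH : LinearMap.range Hᵀ.mulVecLin = K :=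
    range_mulVecLin_eq_ker_of_mul_eq_zero hGH (by simp [rank_transpose, hG, hH, hmn])
  have hkerH : LinearMap.ker H.mulVecLin = BilinForm.orthogonal (dotProductBilin F F) K := by
    rw [← hrowH, ker_mulVecLin_eq_orthogonal_range_transpose]
  have hVperp : {y : Fin n → F | ∀ v ∈ V, y ⬝ᵥ v = 0} =
      BilinForm.orthogonal (dotProductBilin F F) V :=
    Set.ext fun _ => mem_orthogonal_dotProductBilin_iff.symm
  have hdim : finrank F V + finrank F K = finrank F (Fin n → F) := by
    have : G.rank + finrank F K = finrank F (Fin n → F) :=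
      G.mulVecLin.finrank_range_add_finrank_ker
    rw [hV, ← hG, this]
  calc Function.Bijective (fun v : V => G.mulVec (v : Fin n → F))
      ↔ Disjoint V K := G.mulVecLin.bijective_domRestrict_iff_disjoint_ker (by simp [hV])
    _ ↔ Codisjoint V K := Submodule.disjoint_iff_codisjoint_of_finrank_add_eq hdim
    _ ↔ BilinForm.orthogonal (dotProductBilin F F) (V ⊔ K) = ⊥ := by
      rw [codisjoint_iff, BilinForm.orthogonal_eq_bot_iff_eq_top nondegenerate_dotProductBilin]
    _ ↔ Disjoint (BilinForm.orthogonal (dotProductBilin F F) V) (LinearMap.ker H.mulVecLin) := by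
      rw [hkerH, disjoint_iff, BilinForm.orthogonal_sup]
    _ ↔ Set.InjOn (fun y => H.mulVec y) {y : Fin n → F | ∀ v ∈ V, y ⬝ᵥ v = 0} := by
      rw [hVperp]
      exact LinearMap.disjoint_ker_iff_injOn

/-- Let `G ∈ F_q^{m×n}` and `H ∈ F_q^{(n-m)×n}` have full row rank with `G·Hᵀ = 0`, and
let `g(x) = Gx`, `h(x) = Hx`. For any linear subspace `V ⊆ F_q^n` of dimension `m`:
`g` restricted to `V` is a bijection onto `F_q^m` iff `h` restricted to the orthogonal
complement `V^⊥ = {y : ∀ v ∈ V, ⟨y,v⟩ = 0}` is injective. -/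
theorem stmt_5 (F : Type*) [Field F] [Fintype F] (m n : ℕ) (hmn : m ≤ n)
    (G : Matrix (Fin m) (Fin n) F) (H : Matrix (Fin (n - m)) (Fin n) F)
    (hG : G.rank = m) (hH : H.rank = n - m) (hGH : G * Hᵀ = 0)
    (V : Submodule F (Fin n → F)) (hV : Module.finrank F V = m) :
    Function.Bijective (fun v : V => G.mulVec (v : Fin n → F)) ↔
      Set.InjOn (fun y => H.mulVec y) {y : Fin n → F | ∀ v ∈ V, y ⬝ᵥ v = 0} :=
  stmt_5_general F m n G H hG hH hGH V hV
end

section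
/- Any q-ary code C ⊆ A^n over an alphabet A of size q with minimum Hamming distance d satisfies |C| ≤ q·d / (q·d − (q−1)·n), provided q·d > (q−1)·n (Plotkin bound). -/
/-- Plotkin bound: a `q`-ary code `C ⊆ A^n` (with `q = |A|`) whose distinct codewords are
at Hamming distance at least `d`, with `q·d > (q-1)·n`, satisfies
`|C| ≤ q·d / (q·d - (q-1)·n)`. -/
theorem stmt_6 (A : Type*) [Fintype A] [DecidableEq A] (n d : ℕ)
    (C : Finset (Fin n → A))
    (hdist : ∀ c ∈ C, ∀ c' ∈ C, c ≠ c' → d ≤ hammingDist c c')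
    (hq : ((Fintype.card A : ℝ) - 1) * n < (Fintype.card A : ℝ) * d) :
    (C.card : ℝ) ≤ (Fintype.card A : ℝ) * d /
      ((Fintype.card A : ℝ) * d - ((Fintype.card A : ℝ) - 1) * n) := by
  set q := Fintype.card A with hqdef
  set M := C.card with hMdef
  have hden : (0:ℝ) < (q:ℝ) * d - ((q:ℝ) - 1) * n := by linarith
  rcases Nat.eq_zero_or_pos M with hM0 | hM1
  · rw [hM0]
    push_cast
    positivity
  have hq1 : 1 ≤ q := by
    by_contra h
    have hq0 : q = 0 := by omega
    have hA : IsEmpty A := Fintype.card_eq_zero_iff.mp hq0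
    obtain ⟨c, hc⟩ := Finset.card_pos.mp hM1
    rcases Nat.eq_zero_or_pos n with hn | hn
    · rw [hq0] at hq; simp [hn] at hq
    · exact hA.false (c ⟨0, hn⟩)
  set m : Fin n → A → ℕ := fun i a => (C.filter fun c => c i = a).card with hm
  have hMsum : ∀ i, ∑ a, m i a = M := fun i =>
    (Finset.card_eq_sum_card_fiberwise (fun c _ => Finset.mem_univ (c i))).symm
  set stuff : Fin n → ℕ := fun i => ∑ c ∈ C, ∑ c' ∈ C, (if c i ≠ c' i then 1 else 0) with hstuff
  have key1 : ∀ i, stuff i + ∑ a, (m i a)^2 = M * M := by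
    intro i
    have e1 : ∑ a, (m i a)^2 = ∑ c ∈ C, ∑ c' ∈ C, (if c i = c' i then 1 else 0) := by
      have e2 : ∀ c ∈ C, ∑ c' ∈ C, (if c i = c' i then 1 else 0) = m i (c i) := by
        intro c _
        rw [Finset.sum_boole]
        simp only [Nat.cast_id, hm]
        congr 1
        ext c'
        simp [Finset.mem_filter, eq_comm]
      rw [Finset.sum_congr rfl e2,
        ← Finset.sum_fiberwise_of_maps_to' (fun c _ => Finset.mem_univ (c i)) (m i)]
      apply Finset.sum_congr rfl
      intro a _
      rw [Finset.sum_const, smul_eq_mul, sq]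
    rw [e1, hstuff]
    simp only [← Finset.sum_add_distrib]
    have hone : ∀ c ∈ C, ∀ c' ∈ C,
        ((if c i ≠ c' i then 1 else 0) + (if c i = c' i then 1 else 0) : ℕ) = 1 := by
      intro c _ c' _
      by_cases h : c i = c' i <;> simp [h]
    calc (∑ c ∈ C, ∑ c' ∈ C, ((if c i ≠ c' i then 1 else 0) + (if c i = c' i then 1 else 0) : ℕ))
        = ∑ c ∈ C, ∑ c' ∈ C, 1 :=
          Finset.sum_congr rfl fun c hc => Finset.sum_congr rfl fun c' hc' => hone c hc c' hc'
      _ = M * M := by simp [hMdef, mul_comm]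
  set S : ℕ := ∑ c ∈ C, ∑ c' ∈ C, hammingDist c c' with hS
  have h1 : d * ((M - 1) * M) ≤ S := by
    rw [hS]
    calc d * ((M-1) * M) = ∑ _c ∈ C, (M-1) * d := by
          rw [Finset.sum_const, smul_eq_mul]; ring
      _ ≤ ∑ c ∈ C, ∑ c' ∈ C, hammingDist c c' := by
          apply Finset.sum_le_sum
          intro c hc
          calc (M-1) * d = ∑ _c' ∈ C.erase c, d := by
                rw [Finset.sum_const, smul_eq_mul, Finset.card_erase_of_mem hc]
            _ ≤ ∑ c' ∈ C.erase c, hammingDist c c' := by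
                apply Finset.sum_le_sum
                intro c' hc'
                exact hdist c hc c' (Finset.mem_of_mem_erase hc')
                  (Ne.symm (Finset.ne_of_mem_erase hc'))
            _ ≤ ∑ c' ∈ C, hammingDist c c' :=
                Finset.sum_le_sum_of_subset (Finset.erase_subset c C)
  have h2 : S = ∑ i, stuff i := by
    rw [hS, hstuff]
    simp only [hammingDist, Finset.card_filter]
    calc (∑ c ∈ C, ∑ c' ∈ C, ∑ i, if c i ≠ c' i then 1 else 0)
        = ∑ c ∈ C, ∑ i, ∑ c' ∈ C, (if c i ≠ c' i then 1 else 0) :=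
          Finset.sum_congr rfl fun c _ => Finset.sum_comm
      _ = ∑ i, ∑ c ∈ C, ∑ c' ∈ C, (if c i ≠ c' i then 1 else 0) := Finset.sum_comm
  have cauchy : ∀ i, (M:ℝ)^2 ≤ (q:ℝ) * ∑ a, (m i a : ℝ)^2 := by
    intro i
    have h := sq_sum_le_card_mul_sum_sq (s := (Finset.univ : Finset A))
      (f := fun a => (m i a : ℝ))
    have hs : ∑ a, (m i a : ℝ) = (M:ℝ) := by exact_mod_cast congrArg Nat.cast (hMsum i)
    rwa [hs, Finset.card_univ] at h
  -- combine
  have hM1' : 1 ≤ M := hM1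
  have hr1 : (d:ℝ) * (((M:ℝ) - 1) * M) ≤ (S:ℝ) := by
    have := (Nat.cast_le (α := ℝ)).mpr h1
    push_cast [Nat.cast_sub hM1'] at this
    convert this using 2
  have hcomb : (q:ℝ) * ((d:ℝ) * (((M:ℝ)-1) * M)) ≤ ((q:ℝ) - 1) * n * (M * M) := by
    have hqS : (q:ℝ) * ((d:ℝ) * (((M:ℝ)-1)*M)) ≤ (q:ℝ) * S :=
      mul_le_mul_of_nonneg_left hr1 (Nat.cast_nonneg q)
    have hstep : (q:ℝ) * S ≤ ∑ _i : Fin n, ((q:ℝ) - 1) * (M * M) := by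
      have hSr : (S:ℝ) = ∑ i, (stuff i : ℝ) := by exact_mod_cast congrArg Nat.cast h2
      rw [hSr, Finset.mul_sum]
      apply Finset.sum_le_sum
      intro i _
      have hk : (stuff i : ℝ) + ∑ a, (m i a : ℝ)^2 = (M:ℝ) * M := by
        exact_mod_cast congrArg Nat.cast (key1 i)
      nlinarith [cauchy i, hk]
    have heq : ∑ _i : Fin n, ((q:ℝ) - 1) * (M * M) = ((q:ℝ) - 1) * n * (M * M) := by
      rw [Finset.sum_const, Finset.card_univ, Fintype.card_fin]; ring
    linarith [hqS, hstep, heq.le, heq.ge]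
  rw [le_div_iff₀ hden]
  have hM0r : (0:ℝ) < (M:ℝ) := by exact_mod_cast hM1
  nlinarith [hcomb, hden, hM0r, mul_pos hM0r hden]
end

section
/- For any prime power q, any δ ∈ [0,1), any η > 0, and any ε > 0, there exists an [n, δ, ε]_q-erasure code family of rate 1 − δ − η and size t, provided t ≥ 2/(η·ε·log₂ q) and n is sufficiently large (n ≥ C·log(1/ε)/(η·log q) for an absolute constant C). -/
/-!
Take `t` independent uniformly random parity-check matrices `H ∈ F^{m × n}` with
`m = ⌊(δ + η) n⌋`; every kernel then has dimension at least `(1 - δ - η) n`. The code `ker H`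
fails to correct an erasure pattern `S` exactly when `H` kills a nonzero vector supported in `S`;
counting such vectors up to scalars, this has probability at most `q^{|S| - m} / (q - 1)`,
which is at most `2 q^{-ηn}`. More than `εt` of the `t` codes fail on `S` with probability at most
`C(t, k) (2 q^{-ηn})^k` for `k = ⌊εt⌋ + 1`, and a union bound over the at most `2^n` patterns
leaves a good family as soon as `2^n C(t, k) (2 q^{-ηn})^k < 1`. With `C(t, k) ≤ (e/ε)^k`, the
hypotheses on `t` and `n` guarantee this when `ε < 3/4`, and also when `t = 1` (no binomial
factor). The remaining case `ε ≥ 3/4`, `t ≥ 2` is settled deterministically by mixing copies of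
the whole space (full rate) and of the zero code (corrects everything).
-/

open Finset Matrix Real

lemma Fin.ncard_setOf_val_lt {t a : ℕ} (h : a ≤ t) : {i : Fin t | (i : ℕ) < a}.ncard = a := by
  rw [Set.ncard_eq_toFinset_card', Set.toFinset_ofPred, Fin.card_filter_val_lt, min_eq_right h]

section ErasureCodes

variable {F : Type*} [Field F] {n t : ℕ}

def CorrectsErasure (C : Submodule F (Fin n → F)) (S : Finset (Fin n)) : Prop :=
  ∀ c ∈ C, ∀ c' ∈ C, (∀ j ∉ S, c j = c' j) → c = c'

def IsErasureCodeFamily (δ ε R : ℝ) (Cs : Fin t → Submodule F (Fin n → F)) : Prop :=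
  (1 - ε) * t ≤ ({i | R * n ≤ (Module.finrank F (Cs i) : ℝ)}.ncard : ℝ) ∧
    ∀ S : Finset (Fin n), (S.card : ℝ) ≤ δ * n →
      (1 - ε) * t ≤ ({i | CorrectsErasure (Cs i) S}.ncard : ℝ)

lemma correctsErasure_bot (S : Finset (Fin n)) :
    CorrectsErasure (⊥ : Submodule F (Fin n → F)) S := by
  intro c hc c' hc' _
  rw [Submodule.mem_bot] at hc hc'
  rw [hc, hc']

lemma one_sub_mul_le_ncard {ε : ℝ} {P : Fin t → Prop}
    (h : ({i | ¬ P i}.ncard : ℝ) ≤ ε * t) : (1 - ε) * t ≤ ({i | P i}.ncard : ℝ) := by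
  have hsum := Set.ncard_add_ncard_compl {i | P i}
  rw [Set.compl_ofPred, Nat.card_eq_fintype_card, Fintype.card_fin] at hsum
  have : ({i | P i}.ncard : ℝ) + {i | ¬ P i}.ncard = t := by exact_mod_cast hsum
  linarith

lemma IsErasureCodeFamily.of_one_le {δ ε R : ℝ} (hε : 1 ≤ ε)
    (Cs : Fin t → Submodule F (Fin n → F)) : IsErasureCodeFamily δ ε R Cs := by
  have h : (1 - ε) * t ≤ 0 := mul_nonpos_of_nonpos_of_nonneg (by linarith) t.cast_nonneg
  exact ⟨h.trans (Nat.cast_nonneg _), fun _ _ => h.trans (Nat.cast_nonneg _)⟩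

lemma isErasureCodeFamily_bot {δ ε R : ℝ} (hR : R * n ≤ 0) (hε : 0 ≤ ε) :
    IsErasureCodeFamily δ ε R fun _ : Fin t => (⊥ : Submodule F (Fin n → F)) := by
  refine ⟨one_sub_mul_le_ncard ?_, fun S _ => one_sub_mul_le_ncard ?_⟩ <;>
    simp [hR, correctsErasure_bot] <;> positivity

lemma exists_isErasureCodeFamily_top_bot {δ ε R : ℝ} (hR : R ≤ 1) (hε : ε ≤ 1)
    (h : (1 - ε) * t + 1 ≤ ε * t) :
    ∃ Cs : Fin t → Submodule F (Fin n → F), IsErasureCodeFamily δ ε R Cs := by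
  set a := ⌈(1 - ε) * t⌉₊
  have h0 : 0 ≤ (1 - ε) * t := mul_nonneg (by linarith) t.cast_nonneg
  have hat : a ≤ t := Nat.ceil_le.mpr (by nlinarith)
  have ha : (1 - ε) * t ≤ a := Nat.le_ceil _
  have ha' : (a : ℝ) ≤ ε * t := (Nat.ceil_lt_add_one h0).le.trans h
  refine ⟨fun i => if (i : ℕ) < a then ⊤ else ⊥, ?_, fun S _ => one_sub_mul_le_ncard ?_⟩
  · calc (1 - ε) * t ≤ a := ha
      _ = ({i : Fin t | (i : ℕ) < a}.ncard : ℝ) := by rw [Fin.ncard_setOf_val_lt hat]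
      _ ≤ _ := by
          refine Nat.cast_le.mpr (Set.ncard_le_ncard fun i (hi : (i : ℕ) < a) => ?_)
          show R * n ≤ (Module.finrank F ↥(if (i : ℕ) < a then ⊤ else (⊥ : Submodule F _)) : ℝ)
          rw [if_pos hi, finrank_top, Module.finrank_fin_fun]
          exact mul_le_of_le_one_left n.cast_nonneg hR
  · calc (({i | ¬ CorrectsErasure _ S} : Set (Fin t)).ncard : ℝ)
        ≤ ({i : Fin t | (i : ℕ) < a}.ncard : ℝ) := by
          refine Nat.cast_le.mpr (Set.ncard_le_ncard fun i hi => ?_)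
          by_contra (hia : ¬ (i : ℕ) < a)
          rw [Set.mem_ofPred_eq, if_neg hia] at hi
          exact hi (correctsErasure_bot S)
      _ = a := by rw [Fin.ncard_setOf_val_lt hat]
      _ ≤ ε * t := ha'

end ErasureCodes

section UnionBound

variable {Ω : Type*} [Fintype Ω] [DecidableEq Ω] {t : ℕ}

lemma card_filter_le_card_filter_mem_le_choose_mul (A : Finset Ω) (k : ℕ) :
    #{ω : Fin t → Ω | k ≤ #{i | ω i ∈ A}} ≤ t.choose k * #A ^ k * Fintype.card Ω ^ (t - k) := by
  calc #{ω : Fin t → Ω | k ≤ #{i | ω i ∈ A}}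
      ≤ #((powersetCard k univ).biUnion
          fun T => Fintype.piFinset fun i => if i ∈ T then A else univ) := by
        refine card_le_card fun ω hω => ?_
        obtain ⟨T, hTA, hTk⟩ := exists_subset_card_eq (mem_filter.mp hω).2
        refine mem_biUnion.mpr ⟨T, mem_powersetCard.mpr ⟨subset_univ _, hTk⟩, ?_⟩
        refine Fintype.mem_piFinset.mpr fun i => ?_
        split_ifs with hi
        · exact (mem_filter.mp (hTA hi)).2
        · exact mem_univ _
    _ ≤ ∑ T ∈ powersetCard k (univ : Finset (Fin t)),
          #(Fintype.piFinset fun i => if i ∈ T then A else univ) := card_biUnion_le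
    _ = ∑ _T ∈ powersetCard k (univ : Finset (Fin t)), #A ^ k * Fintype.card Ω ^ (t - k) := by
        refine sum_congr rfl fun T hT => ?_
        have hTk := (mem_powersetCard.mp hT).2
        rw [Fintype.card_piFinset, prod_apply_ite, prod_const, prod_const, card_univ,
          filter_univ_mem, hTk, filter_not, filter_univ_mem, ← compl_eq_univ_sdiff, card_compl,
          Fintype.card_fin, hTk]
    _ = t.choose k * #A ^ k * Fintype.card Ω ^ (t - k) := by
        rw [sum_const, card_powersetCard, card_univ, Fintype.card_fin, smul_eq_mul, mul_assoc]

lemma exists_forall_card_filter_mem_lt [Nonempty Ω] {ι : Type*} (𝒮 : Finset ι)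
    (A : ι → Finset Ω) (k : ℕ) (β : ℝ) (hA : ∀ S ∈ 𝒮, (#(A S) : ℝ) ≤ β * Fintype.card Ω)
    (hβ : #𝒮 * t.choose k * β ^ k < 1) :
    ∃ ω : Fin t → Ω, ∀ S ∈ 𝒮, #{i | ω i ∈ A S} < k := by
  by_contra! h
  have hcover : (univ : Finset (Fin t → Ω)) ⊆ 𝒮.biUnion fun S => {ω | k ≤ #{i | ω i ∈ A S}} :=
    fun ω _ => by simpa using h ω
  have hN : (0 : ℝ) < Fintype.card Ω := by exact_mod_cast Fintype.card_pos
  have hcount : ∀ S ∈ 𝒮, (#{ω : Fin t → Ω | k ≤ #{i | ω i ∈ A S}} : ℝ)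
      ≤ t.choose k * β ^ k * Fintype.card Ω ^ t := fun S hS => by
    calc (#{ω : Fin t → Ω | k ≤ #{i | ω i ∈ A S}} : ℝ)
        ≤ t.choose k * #(A S) ^ k * Fintype.card Ω ^ (t - k) := by
          exact_mod_cast card_filter_le_card_filter_mem_le_choose_mul (A S) k
      _ ≤ t.choose k * (β * Fintype.card Ω) ^ k * Fintype.card Ω ^ (t - k) := by
          gcongr
          exact hA S hS
      _ = t.choose k * β ^ k * Fintype.card Ω ^ t := by
          rcases le_or_gt k t with hkt | hkt
          · rw [mul_pow, ← pow_sub_mul_pow _ hkt]; ring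
          · simp [Nat.choose_eq_zero_of_lt hkt]
  have := calc (Fintype.card Ω : ℝ) ^ t
      = #(univ : Finset (Fin t → Ω)) := by simp
    _ ≤ ∑ S ∈ 𝒮, (#{ω : Fin t → Ω | k ≤ #{i | ω i ∈ A S}} : ℝ) := by
        exact_mod_cast (card_le_card hcover).trans card_biUnion_le
    _ ≤ ∑ S ∈ 𝒮, t.choose k * β ^ k * Fintype.card Ω ^ t := sum_le_sum hcount
    _ = #𝒮 * t.choose k * β ^ k * Fintype.card Ω ^ t := by rw [sum_const, nsmul_eq_mul]; ring
    _ < Fintype.card Ω ^ t := by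
        have := pow_pos hN t
        nlinarith
  exact lt_irrefl _ this

end UnionBound

section ParityCheck

variable {F : Type*} [Field F] {ι κ : Type*} [Fintype ι] [Fintype κ]

def Matrix.HasKernelVectorIn (H : Matrix ι κ F) (S : Finset κ) : Prop :=
  ∃ c ≠ 0, (∀ j ∉ S, c j = 0) ∧ H *ᵥ c = 0

lemma card_le_card_add_finrank_ker_mulVecLin (H : Matrix ι κ F) :
    Fintype.card κ ≤ Fintype.card ι + Module.finrank F (LinearMap.ker H.mulVecLin) := by
  have := LinearMap.finrank_range_add_finrank_ker H.mulVecLin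
  rw [Module.finrank_fintype_fun_eq_card] at this
  have := H.rank_le_card_height
  rw [rank] at this
  omega

variable [Fintype F] [DecidableEq F] [DecidableEq ι] [DecidableEq κ]

lemma card_filter_mulVec_eq_zero_mul {c : κ → F} (hc : c ≠ 0) :
    #{H : Matrix ι κ F | H *ᵥ c = 0} * Fintype.card F ^ Fintype.card ι
      = Fintype.card F ^ (Fintype.card ι * Fintype.card κ) := by
  obtain ⟨j, hj : c j ≠ 0⟩ := Function.ne_iff.mp hc
  let φ : Matrix ι κ F →ₗ[F] ι → F := (mulVecBilin F F).flip c
  have hφ : Function.Surjective φ := fun y => ⟨vecMulVec y (Pi.single j (c j)⁻¹), by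
    ext i; simp [φ, mulVec, vecMulVec, dotProduct, Pi.single_apply, hj]⟩
  have hrank := LinearMap.finrank_range_add_finrank_ker φ
  rw [LinearMap.range_eq_top.mpr hφ, finrank_top, Module.finrank_fintype_fun_eq_card,
    Module.finrank_matrix, Module.finrank_self, mul_one] at hrank
  have hker : #{H : Matrix ι κ F | H *ᵥ c = 0} = Nat.card (LinearMap.ker φ) := by
    rw [← Fintype.card_subtype, ← Nat.card_eq_fintype_card]
    rfl
  rw [hker, Module.natCard_eq_pow_finrank (K := F), Nat.card_eq_fintype_card, ← pow_add,
    add_comm, hrank]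

/-- Each bad `H` kills the `q - 1` nonzero multiples of its kernel vector, and each of the at
most `q ^ #S` vectors supported in `S` is killed by a `q ^ (-card ι)` fraction of all matrices. -/
lemma card_mul_le_of_forall_hasKernelVectorIn {S : Finset κ} {bad : Finset (Matrix ι κ F)}
    (hbad : ∀ H ∈ bad, H.HasKernelVectorIn S) :
    #bad * (Fintype.card F - 1) * Fintype.card F ^ Fintype.card ι
      ≤ Fintype.card F ^ #S * Fintype.card F ^ (Fintype.card ι * Fintype.card κ) := by
  set q := Fintype.card F
  set D := (Fintype.piFinset fun j : κ => if j ∈ S then (univ : Finset F) else {0}).erase 0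
  have hD : #D ≤ q ^ #S := by
    refine card_erase_le.trans_eq ?_
    rw [Fintype.card_piFinset, prod_apply_ite, prod_const, prod_const, filter_univ_mem,
      card_univ, card_singleton, one_pow, mul_one]
  have hmul : ∀ H ∈ bad, q - 1 ≤ #(D.bipartiteAbove (fun H c => H *ᵥ c = 0) H) := by
    intro H hH
    obtain ⟨c, hc, hcS, hHc⟩ := hbad H hH
    calc q - 1 = #((univ : Finset F).erase 0) := by rw [card_erase_of_mem (mem_univ _), card_univ]
      _ ≤ _ := card_le_card_of_injOn (· • c) (fun a ha => ?_) (smul_left_injective F hc).injOn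
    refine mem_filter.mpr ⟨mem_erase.mpr ⟨smul_ne_zero (ne_of_mem_erase ha) hc, ?_⟩, ?_⟩
    · refine Fintype.mem_piFinset.mpr fun j => ?_
      split_ifs with hj
      · exact mem_univ _
      · simp [hcS j hj]
    · simp [mulVec_smul, hHc]
  calc #bad * (q - 1) * q ^ Fintype.card ι
      ≤ (∑ H ∈ bad, #(D.bipartiteAbove (fun H c => H *ᵥ c = 0) H)) * q ^ Fintype.card ι := by
        gcongr
        exact card_nsmul_le_sum _ _ _ hmul
    _ = (∑ c ∈ D, #(bad.bipartiteBelow (fun H c => H *ᵥ c = 0) c)) * q ^ Fintype.card ι := by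
        rw [sum_card_bipartiteAbove_eq_sum_card_bipartiteBelow]
    _ ≤ ∑ c ∈ D, #{H : Matrix ι κ F | H *ᵥ c = 0} * q ^ Fintype.card ι := by
        rw [sum_mul]
        gcongr
        exact filter_subset_filter _ (subset_univ _)
    _ = #D * q ^ (Fintype.card ι * Fintype.card κ) := by
        rw [sum_congr rfl fun c hc => card_filter_mulVec_eq_zero_mul (ne_of_mem_erase hc),
          sum_const, smul_eq_mul]
    _ ≤ q ^ #S * q ^ (Fintype.card ι * Fintype.card κ) := by gcongr

lemma card_le_of_forall_hasKernelVectorIn {S : Finset κ} {s : ℕ} (hS : #S ≤ s)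
    {bad : Finset (Matrix ι κ F)} (hbad : ∀ H ∈ bad, H.HasKernelVectorIn S) :
    (#bad : ℝ) ≤ (Fintype.card F : ℝ) ^ s / ((Fintype.card F - 1) * Fintype.card F ^ Fintype.card ι)
      * Fintype.card (Matrix ι κ F) := by
  set q := Fintype.card F
  have hq : 1 < q := Fintype.one_lt_card
  have hq' : (0 : ℝ) < (q - 1) * q ^ Fintype.card ι := by
    have : (1 : ℝ) < q := by exact_mod_cast hq
    positivity
  have h : #bad * (q - 1) * q ^ Fintype.card ι ≤ q ^ s * q ^ (Fintype.card ι * Fintype.card κ) :=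
    (card_mul_le_of_forall_hasKernelVectorIn hbad).trans
      (Nat.mul_le_mul_right _ (Nat.pow_le_pow_right hq.le hS))
  have h' := (Nat.cast_le (α := ℝ)).mpr h
  push_cast [Nat.cast_sub hq.le] at h'
  have hcard : Fintype.card (Matrix ι κ F) = q ^ (Fintype.card ι * Fintype.card κ) := by
    rw [Fintype.card_congr of.symm]
    simp [q, ← pow_mul, mul_comm]
  rw [hcard, div_mul_eq_mul_div, le_div_iff₀ hq']
  push_cast
  linarith

end ParityCheck

lemma correctsErasure_ker_mulVecLin {F : Type*} [Field F] {m n : ℕ}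
    {H : Matrix (Fin m) (Fin n) F} {S : Finset (Fin n)} (h : ¬ H.HasKernelVectorIn S) :
    CorrectsErasure (LinearMap.ker H.mulVecLin) S := by
  intro c hc c' hc' hcc
  by_contra hne
  refine h ⟨c - c', sub_ne_zero.mpr hne, fun j hj => sub_eq_zero.mpr (hcc j hj), ?_⟩
  rw [LinearMap.mem_ker, mulVecLin_apply] at hc hc'
  rw [mulVec_sub, hc, hc', sub_zero]

lemma isErasureCodeFamily_ker_mulVecLin {F : Type*} [Field F] {m n t k : ℕ} {δ ε R : ℝ}
    (ω : Fin t → Matrix (Fin m) (Fin n) F) (hR : R * n ≤ n - m) (hε : 0 ≤ ε)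
    (hk : (k : ℝ) ≤ ε * t + 1)
    (hω : ∀ S : Finset (Fin n), (#S : ℝ) ≤ δ * n → {i | (ω i).HasKernelVectorIn S}.ncard < k) :
    IsErasureCodeFamily δ ε R fun i => LinearMap.ker (ω i).mulVecLin := by
  refine ⟨one_sub_mul_le_ncard ?_, fun S hS => one_sub_mul_le_ncard ?_⟩
  · have hempty : {i | ¬ R * n ≤ (Module.finrank F (LinearMap.ker (ω i).mulVecLin) : ℝ)} = ∅ := by
      refine Set.eq_empty_of_forall_notMem fun i hi => hi ?_
      have := card_le_card_add_finrank_ker_mulVecLin (ω i)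
      simp only [Fintype.card_fin] at this
      have : (n : ℝ) ≤ m + Module.finrank F (LinearMap.ker (ω i).mulVecLin) := by
        exact_mod_cast this
      linarith
    rw [hempty, Set.ncard_empty, Nat.cast_zero]
    positivity
  · have hlt : ({i | (ω i).HasKernelVectorIn S}.ncard : ℝ) + 1 ≤ k := by
      exact_mod_cast hω S hS
    calc (({i | ¬ CorrectsErasure (LinearMap.ker (ω i).mulVecLin) S} : Set (Fin t)).ncard : ℝ)
        ≤ {i | (ω i).HasKernelVectorIn S}.ncard :=
          Nat.cast_le.mpr <| Set.ncard_le_ncard fun i hi =>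
            not_not.mp (mt correctsErasure_ker_mulVecLin hi)
      _ ≤ ε * t := by linarith

lemma choose_le_exp_one_div_pow {t k : ℕ} {ε : ℝ} (hε : 0 < ε) (hk : ε * t ≤ k) (hk0 : 0 < k) :
    (t.choose k : ℝ) ≤ (exp 1 / ε) ^ k := by
  have hk0' : (0 : ℝ) < k := by exact_mod_cast hk0
  have htk : (t : ℝ) / k ≤ 1 / ε := by
    rw [div_le_div_iff₀ hk0' hε]
    linarith
  calc (t.choose k : ℝ) ≤ (t : ℝ) ^ k / k.factorial := Nat.choose_le_pow_div k t
    _ = ((t : ℝ) / k) ^ k * ((k : ℝ) ^ k / k.factorial) := by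
        rw [div_pow]
        field_simp
    _ ≤ (1 / ε) ^ k * exp k := by
        gcongr
        exact pow_div_factorial_le_exp _ (Nat.cast_nonneg _) k
    _ = (exp 1 / ε) ^ k := by rw [← exp_one_pow, div_pow, div_pow, one_pow]; ring

lemma pow_div_sub_one_mul_pow_le {q x : ℝ} {s m : ℕ} (hq : 2 ≤ q) (h : x - 1 ≤ (m : ℝ) - s) :
    q ^ s / ((q - 1) * q ^ m) ≤ 2 * exp (-(x * log q)) := by
  have hq0 : 0 < q := by linarith
  have hpow : ∀ k : ℕ, q ^ k = exp (k * log q) := fun k => by rw [exp_nat_mul, exp_log hq0]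
  have hL : 0 < log q := log_pos (by linarith)
  have hdiv : q ^ s / q ^ m ≤ q * exp (-(x * log q)) := by
    rw [hpow, hpow, ← exp_sub, ← exp_log hq0, ← exp_add, exp_log hq0]
    gcongr
    nlinarith
  calc q ^ s / ((q - 1) * q ^ m) = q ^ s / q ^ m / (q - 1) := by rw [div_div, mul_comm]
    _ ≤ q * exp (-(x * log q)) / (q - 1) := by gcongr; linarith
    _ ≤ 2 * exp (-(x * log q)) := by
        rw [div_le_iff₀ (by linarith)]
        nlinarith [exp_pos (-(x * log q))]

lemma two_pow_mul_two_mul_exp_neg_lt_one {X : ℝ} {n : ℕ} (hX : 2 * n * log 2 < X) (hn : 1 ≤ n) :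
    2 ^ n * (2 * exp (-X)) < 1 := by
  have hn' : (1 : ℝ) ≤ n := by exact_mod_cast hn
  have hlog2 : 0 < log 2 := log_pos one_lt_two
  calc 2 ^ n * (2 * exp (-X)) = exp ((n + 1) * log 2 - X) := by
        rw [exp_sub, exp_neg, ← Nat.cast_succ, exp_nat_mul, exp_log two_pos, pow_succ]
        ring
    _ < 1 := exp_lt_one_iff.mpr (by nlinarith)

lemma two_pow_mul_choose_mul_two_mul_exp_neg_pow_lt_one {ε X : ℝ} {n t k : ℕ} (hε : 0 < ε)
    (hk : ε * t < k) (hεt : 2 * n * log 2 ≤ ε * t * X) (hX : 4 ≤ X)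
    (hlog : 20 * log (1 / ε) ≤ X) : 2 ^ n * t.choose k * (2 * exp (-X)) ^ k < 1 := by
  have hk0 : 0 < k := by
    have : (0 : ℝ) < k := lt_of_le_of_lt (by positivity) hk
    exact_mod_cast this
  -- In logarithms the claim reads `n log 2 + k a < 0`, and `k a ≤ -k X / 2 < -ε t X / 2`.
  set a := log 2 + 1 + log (1 / ε) - X
  have ha : a ≤ -(X / 2) := by linarith [log_two_lt_d9]
  calc 2 ^ n * t.choose k * (2 * exp (-X)) ^ k
      ≤ 2 ^ n * (exp 1 / ε) ^ k * (2 * exp (-X)) ^ k := by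
        gcongr
        exact choose_le_exp_one_div_pow hε hk.le hk0
    _ = exp (n * log 2 + k * a) := by
        rw [mul_assoc, ← mul_pow, exp_add, exp_nat_mul, exp_nat_mul, exp_log two_pos]
        congr 2
        simp only [a, exp_sub, exp_add, exp_neg, exp_log two_pos, exp_log (one_div_pos.mpr hε)]
        field_simp
    _ < 1 := by
        refine exp_lt_one_iff.mpr ?_
        have h1 : (k : ℝ) * a ≤ k * -(X / 2) := by gcongr
        have h2 : ε * t * X < k * X := by gcongr
        linarith

theorem exists_isErasureCodeFamily_of_union_bound {F : Type*} [Field F] [Fintype F] {n t k : ℕ}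
    {δ η ε : ℝ} (hδ : 0 ≤ δ) (hη : 0 ≤ η) (hε : 0 ≤ ε) (hk : (k : ℝ) ≤ ε * t + 1)
    (h : 2 ^ n * t.choose k * (2 * exp (-(η * n * log (Fintype.card F)))) ^ k < 1) :
    ∃ Cs : Fin t → Submodule F (Fin n → F), IsErasureCodeFamily δ ε (1 - δ - η) Cs := by
  classical
  set q := Fintype.card F
  have hq : (2 : ℝ) ≤ q := by exact_mod_cast Fintype.one_lt_card
  set m := ⌊(δ + η) * n⌋₊
  have hm := Nat.floor_le (a := (δ + η) * n) (by positivity)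
  set β : ℝ := (q : ℝ) ^ ⌊δ * n⌋₊ / ((q - 1) * q ^ m)
  have hβ : β ≤ 2 * exp (-(η * n * log q)) := by
    refine pow_div_sub_one_mul_pow_le hq ?_
    have := Nat.floor_le (a := δ * n) (by positivity)
    have := Nat.sub_one_lt_floor ((δ + η) * n)
    linarith
  let bad (S : Finset (Fin n)) : Finset (Matrix (Fin m) (Fin n) F) := {H | H.HasKernelVectorIn S}
  let 𝒮 : Finset (Finset (Fin n)) := {S | (#S : ℝ) ≤ δ * n}
  have h𝒮 : (#𝒮 : ℝ) ≤ 2 ^ n := by exact_mod_cast (card_filter_le _ _).trans_eq (by simp)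
  have hβ0 : 0 ≤ β := div_nonneg (by positivity) (mul_nonneg (by linarith) (by positivity))
  have hA (S) (hS : S ∈ 𝒮) : (#(bad S) : ℝ) ≤ β * Fintype.card (Matrix (Fin m) (Fin n) F) := by
    simpa only [Fintype.card_fin] using card_le_of_forall_hasKernelVectorIn (ι := Fin m)
      (Nat.le_floor (mem_filter.mp hS).2) fun H hH => (mem_filter.mp hH).2
  obtain ⟨ω, hω⟩ := exists_forall_card_filter_mem_lt (t := t) 𝒮 bad k β hA <| by
    calc (#𝒮 : ℝ) * t.choose k * β ^ k
        ≤ 2 ^ n * t.choose k * (2 * exp (-(η * n * log q))) ^ k := by gcongr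
      _ < 1 := h
  refine ⟨_, isErasureCodeFamily_ker_mulVecLin ω (by linarith) hε hk fun S hS => ?_⟩
  simpa [bad, ← Set.ncard_coe_finset] using hω S (mem_filter.mpr ⟨mem_univ _, hS⟩)

theorem exists_isErasureCodeFamily_fin_one {F : Type*} [Field F] [Fintype F] {n : ℕ}
    {δ η ε : ℝ} (hδ : 0 ≤ δ) (hη : 0 ≤ η) (hε : 0 ≤ ε)
    (h : 2 * log 2 < η * log (Fintype.card F)) :
    ∃ Cs : Fin 1 → Submodule F (Fin n → F), IsErasureCodeFamily δ ε (1 - δ - η) Cs := by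
  rcases n.eq_zero_or_pos with rfl | hn
  · exact ⟨_, isErasureCodeFamily_bot (by simp) hε⟩
  have := mul_lt_mul_of_pos_left h (Nat.cast_pos.mpr hn : (0 : ℝ) < n)
  refine exists_isErasureCodeFamily_of_union_bound hδ hη hε (k := 1) (by simp; positivity) ?_
  simpa using two_pow_mul_two_mul_exp_neg_lt_one (by linarith) hn

theorem exists_isErasureCodeFamily_of_lt_three_fourths {F : Type*} [Field F] [Fintype F]
    {n t : ℕ} {δ η ε : ℝ} (hδ : 0 ≤ δ) (hη : 0 ≤ η) (hε : 0 < ε) (hε' : ε < 3 / 4)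
    (ht : 2 * log 2 ≤ ε * t * (η * log (Fintype.card F)))
    (hn : 20 * log (1 / ε) ≤ η * n * log (Fintype.card F)) :
    ∃ Cs : Fin t → Submodule F (Fin n → F), IsErasureCodeFamily δ ε (1 - δ - η) Cs := by
  have hlog : 1 - ε ≤ log (1 / ε) := by
    simpa using one_sub_inv_le_log_of_pos (one_div_pos.mpr hε)
  refine exists_isErasureCodeFamily_of_union_bound hδ hη hε.le (k := ⌊ε * t⌋₊ + 1) ?_
    (two_pow_mul_choose_mul_two_mul_exp_neg_pow_lt_one hε ?_ (by nlinarith) (by linarith) hn)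
  · push_cast
    linarith [Nat.floor_le (a := ε * t) (by positivity)]
  · push_cast
    exact Nat.lt_floor_add_one _

/-- Existence of erasure code families: there is an absolute constant `C > 0` such that
for any finite field `F_q`, any `δ ∈ [0,1)`, `η > 0`, `ε > 0`, and any `t, n` with
`t ≥ 2/(η·ε·log₂ q)` and `n ≥ C·log(1/ε)/(η·log q)`, there is a family of `t` linear
codes in `F_q^n` such that all but an `ε` fraction have dimension at least `(1-δ-η)·n`,
and for every `S ⊆ [n]` with `|S| ≤ δn`, all but an `ε` fraction of the codes correct
the erasure pattern `S`. -/
theorem stmt_7 :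
    ∃ C : ℝ, 0 < C ∧
      ∀ (F : Type) [Field F] [Fintype F], ∀ δ η ε : ℝ,
        0 ≤ δ → δ < 1 → 0 < η → 0 < ε →
        ∀ t n : ℕ,
          2 / (η * ε * Real.logb 2 (Fintype.card F)) ≤ (t : ℝ) →
          C * Real.log (1 / ε) / (η * Real.log (Fintype.card F)) ≤ (n : ℝ) →
          ∃ Cs : Fin t → Submodule F (Fin n → F),
            (1 - ε) * t ≤
              (({i : Fin t | (1 - δ - η) * n ≤ (Module.finrank F (Cs i) : ℝ)} :
                Set (Fin t)).ncard : ℝ) ∧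
            ∀ S : Finset (Fin n), (S.card : ℝ) ≤ δ * n →
              (1 - ε) * t ≤
                (({i : Fin t | ∀ c ∈ Cs i, ∀ c' ∈ Cs i,
                    (∀ j ∉ S, c j = c' j) → c = c'} : Set (Fin t)).ncard : ℝ) := by
  refine ⟨20, by norm_num, fun F _ _ δ η ε hδ _ hη hε t n ht hn => ?_⟩
  show ∃ Cs, IsErasureCodeFamily δ ε (1 - δ - η) Cs
  have hL : 0 < log (Fintype.card F) := log_pos (by exact_mod_cast Fintype.one_lt_card)
  have ht' : 2 * log 2 ≤ ε * t * (η * log (Fintype.card F)) := by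
    have : 0 < log 2 := log_pos one_lt_two
    rw [logb, div_le_iff₀ (by positivity)] at ht
    field_simp at ht
    linarith
  have hn' : 20 * log (1 / ε) ≤ η * n * log (Fintype.card F) := by
    rw [div_le_iff₀ (by positivity)] at hn
    linarith
  rcases le_or_gt 1 ε with hε1 | hε1
  · exact ⟨fun _ => ⊥, IsErasureCodeFamily.of_one_le hε1 _⟩
  obtain rfl | ht2 : t = 1 ∨ 2 ≤ t := by
    rcases t with _ | _ | t
    · simp at ht'; linarith [log_pos one_lt_two]
    · simp
    · omega
  · rw [Nat.cast_one, mul_one] at ht'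
    exact exists_isErasureCodeFamily_fin_one hδ hη.le hε.le (by nlinarith [mul_pos hη hL])
  rcases le_or_gt (3 / 4) ε with hε34 | hε34
  · have ht2' : (2 : ℝ) ≤ t := by exact_mod_cast ht2
    exact exists_isErasureCodeFamily_top_bot (by linarith) hε1.le (by nlinarith)
  · exact exists_isErasureCodeFamily_of_lt_three_fourths hδ hη.le hε hε34 ht' hn'
end

section
/- Fix a prime power q, δ_row, δ_col ∈ [0,1), and η > 0. There is M₀ = O(1/η) such that for all integers M, N with min{M, N} ≥ M₀, there exists an F_q-linear subspace C ⊆ F_q^{M×N} of dimension at least ((1−δ_row)(1−δ_col) − η)·M·N such that: for every S ⊆ [M] with |S| ≤ δ_row·M and T ⊆ [N] with |T| ≤ δ_col·N, every nonzero C ∈ C has a nonzero entry in some row outside S and column outside T. -/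
open Finset

theorem avoid_lemma (F V : Type) [Field F] [Fintype F] [AddCommGroup V] [Module F V]
    [Fintype V] (B : Finset V) (hB0 : (0:V) ∉ B) (k : ℕ)
    (hk : k ≤ Module.finrank F V)
    (hcard : B.card * Fintype.card F ^ k < Fintype.card V) :
    ∃ W : Submodule F V, k ≤ Module.finrank F ↥W ∧ ∀ b ∈ B, b ∉ W := by
  classical
  induction k with
  | zero =>
    refine ⟨⊥, Nat.zero_le _, fun b hb hbW => ?_⟩
    rw [Submodule.mem_bot] at hbW
    exact hB0 (hbW ▸ hb)
  | succ k ih =>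
    have hq2 : 2 ≤ Fintype.card F := Fintype.one_lt_card
    have hq1 : 1 ≤ Fintype.card F := by omega
    obtain ⟨W, hWk, hWB⟩ := ih (le_trans (Nat.le_succ k) hk)
      (lt_of_le_of_lt (Nat.mul_le_mul_left _ (Nat.pow_le_pow_right hq1 (Nat.le_succ k))) hcard)
    by_cases hWk' : k + 1 ≤ Module.finrank F ↥W
    · exact ⟨W, hWk', hWB⟩
    have hfr : Module.finrank F ↥W = k := le_antisymm (by omega) hWk
    have hcardW : Fintype.card ↥W = Fintype.card F ^ k := by
      rw [Module.card_eq_pow_finrank (K := F) (V := ↥W), hfr]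
    set q := Fintype.card F with hq
    set Wfin : Finset V := univ.filter (· ∈ W) with hWfin
    have hWfincard : Wfin.card = q ^ k := by
      rw [hWfin, ← hcardW]
      exact (Fintype.card_subtype _).symm
    set Bad : Finset V :=
      univ.filter (fun v => v ∈ W ∨ ∃ α : F, α ≠ 0 ∧ ∃ w ∈ W, α • v + w ∈ B) with hBad
    have hBadsub : Bad ⊆ Wfin ∪ Finset.image (fun t : F × V × V => t.1⁻¹ • (t.2.2 - t.2.1))
        ((univ.filter (· ≠ (0:F))) ×ˢ Wfin ×ˢ B) := by
      intro v hv
      rw [hBad, mem_filter] at hv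
      rcases hv.2 with hvW | ⟨α, hα, w, hw, hb⟩
      · exact mem_union_left _ (by simp [hWfin, hvW])
      · refine mem_union_right _ ?_
        refine Finset.mem_image.2 ⟨⟨α, w, α • v + w⟩, ?_, ?_⟩
        · simp only [mem_product, mem_filter, mem_univ, true_and]
          exact ⟨hα, by simp [hWfin, hw], hb⟩
        · simp only
          rw [add_sub_cancel_right, smul_smul, inv_mul_cancel₀ hα, one_smul]
    have hfiltercard : (univ.filter (· ≠ (0:F))).card = q - 1 := by
      rw [Finset.filter_ne' univ 0, Finset.card_erase_of_mem (mem_univ 0), Finset.card_univ]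
    have hBadcard : Bad.card < Fintype.card V := by
      have h1 : Bad.card ≤ q ^ k + (q - 1) * (q ^ k * B.card) := by
        calc Bad.card ≤ _ := Finset.card_le_card hBadsub
          _ ≤ Wfin.card + _ := Finset.card_union_le _ _
          _ ≤ q ^ k + (q - 1) * (q ^ k * B.card) := by
              refine Nat.add_le_add hWfincard.le ?_
              calc (Finset.image _ _).card ≤ _ := Finset.card_image_le
                _ = (q - 1) * (q ^ k * B.card) := by
                    rw [Finset.card_product, Finset.card_product, hfiltercard, hWfincard]
      rcases Nat.eq_zero_or_pos B.card with hB | hB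
      · have hkn : k < Module.finrank F V := by omega
        have h2 : q ^ k < q ^ Module.finrank F V := Nat.pow_lt_pow_right (by omega) hkn
        have hcV : Fintype.card V = q ^ Module.finrank F V := Module.card_eq_pow_finrank
        simp only [hB, Nat.mul_zero] at h1
        omega
      · have h4 : q ^ k + (q - 1) * (q ^ k * B.card) ≤ B.card * q ^ (k + 1) := by
          have h2 : q ^ k ≤ q ^ k * B.card := Nat.le_mul_of_pos_right _ hB
          have h3 : q ^ (k + 1) = q * q ^ k := by ring
          calc q ^ k + (q - 1) * (q ^ k * B.card)
              ≤ q ^ k * B.card + (q - 1) * (q ^ k * B.card) := by omega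
            _ = (1 + (q - 1)) * (q ^ k * B.card) := by ring
            _ = q * (q ^ k * B.card) := by
                congr 1
                omega
            _ = B.card * q ^ (k + 1) := by rw [h3]; ring
        omega
    have hex : ∃ v : V, v ∉ Bad := by
      by_contra h
      push_neg at h
      have := Finset.eq_univ_of_forall h
      rw [this, Finset.card_univ] at hBadcard
      omega
    obtain ⟨v, hv⟩ := hex
    rw [hBad, mem_filter] at hv
    push_neg at hv
    have hv' := hv (mem_univ v)
    obtain ⟨hvW, hvB⟩ := hv'
    refine ⟨W ⊔ F ∙ v, ?_, ?_⟩
    · have hlt : W < W ⊔ F ∙ v := by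
        refine lt_of_le_of_ne le_sup_left (fun h => hvW ?_)
        rw [h]
        exact Submodule.mem_sup_right (Submodule.mem_span_singleton_self v)
      have := Submodule.finrank_lt_finrank_of_lt (K := F) hlt
      omega
    · intro b hb hbW'
      rcases Submodule.mem_sup.1 hbW' with ⟨w, hw, x, hx, hwx⟩
      rcases Submodule.mem_span_singleton.1 hx with ⟨α, rfl⟩
      by_cases hα : α = 0
      · subst hα
        rw [zero_smul, add_zero] at hwx
        exact hWB b hb (hwx ▸ hw)
      · refine hvB α hα w hw ?_
        rw [add_comm, hwx]
        exact hb

set_option maxHeartbeats 1000000 in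
/-- Existence of linear bipartite graph codes: there is an absolute constant `C₀ > 0`
such that for any finite field `F_q`, `δ_row, δ_col ∈ [0,1)` and `η > 0`, whenever
`min{M,N} ≥ C₀/η`, there is an `F_q`-linear subspace of `F_q^{M×N}` of dimension at
least `((1-δ_row)(1-δ_col) - η)·M·N` in which every nonzero codeword has a nonzero entry
in some row outside any given `S` with `|S| ≤ δ_row·M` and column outside any given `T`
with `|T| ≤ δ_col·N`. -/
theorem stmt_8 :
    ∃ C₀ : ℝ, 0 < C₀ ∧
      ∀ (F : Type) [Field F] [Fintype F], ∀ δr δc η : ℝ,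
        0 ≤ δr → δr < 1 → 0 ≤ δc → δc < 1 → 0 < η →
        ∀ M N : ℕ, C₀ / η ≤ (M : ℝ) → C₀ / η ≤ (N : ℝ) →
          ∃ Code : Submodule F (Matrix (Fin M) (Fin N) F),
            ((1 - δr) * (1 - δc) - η) * M * N ≤ (Module.finrank F Code : ℝ) ∧
            ∀ S : Finset (Fin M), (S.card : ℝ) ≤ δr * M →
              ∀ T : Finset (Fin N), (T.card : ℝ) ≤ δc * N →
                ∀ X ∈ Code, X ≠ 0 → ∃ i ∉ S, ∃ j ∉ T, X i j ≠ 0 := by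
  classical
  refine ⟨4, by norm_num, ?_⟩
  intro F _ _ δr δc η hδr0 hδr1 hδc0 hδc1 hη M N hM hN
  by_cases hr0 : ((1 - δr) * (1 - δc) - η) * M * N ≤ 0
  · refine ⟨⊥, ?_, ?_⟩
    · simpa [finrank_bot] using hr0
    · intro S _ T _ X hX hX0
      exact absurd ((Submodule.mem_bot F).1 hX) hX0
  push_neg at hr0
  set r : ℝ := ((1 - δr) * (1 - δc) - η) * M * N with hr
  -- basic numeric facts
  have hMpos : (0:ℝ) < M := lt_of_lt_of_le (div_pos (by norm_num) hη) hM
  have hNpos : (0:ℝ) < N := lt_of_lt_of_le (div_pos (by norm_num) hη) hN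
  have hM1 : (1:ℝ) ≤ M := by exact_mod_cast Nat.one_le_cast.2 (by exact_mod_cast Nat.pos_of_ne_zero (by intro h; rw [h] at hMpos; simp at hMpos))
  have hN1 : (1:ℝ) ≤ N := by exact_mod_cast Nat.one_le_cast.2 (by exact_mod_cast Nat.pos_of_ne_zero (by intro h; rw [h] at hNpos; simp at hNpos))
  have hM4 : 4 ≤ η * M := by rwa [div_le_iff₀ hη, mul_comm] at hM
  have hN4 : 4 ≤ η * N := by rwa [div_le_iff₀ hη, mul_comm] at hN
  set s₀ : ℕ := ⌊δr * M⌋₊ with hs₀def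
  set t₀ : ℕ := ⌊δc * N⌋₊ with ht₀def
  have hs₀ : (s₀ : ℝ) ≤ δr * M := Nat.floor_le (by positivity)
  have ht₀ : (t₀ : ℝ) ≤ δc * N := Nat.floor_le (by positivity)
  have hs₀M : s₀ ≤ M := by
    have h1 : δr * M ≤ (M:ℝ) := by nlinarith
    calc s₀ ≤ ⌊(M:ℝ)⌋₊ := Nat.floor_le_floor h1
      _ = M := Nat.floor_natCast M
  have ht₀N : t₀ ≤ N := by
    have h1 : δc * N ≤ (N:ℝ) := by nlinarith
    calc t₀ ≤ ⌊(N:ℝ)⌋₊ := Nat.floor_le_floor h1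
      _ = N := Nat.floor_natCast N
  set e₀ : ℕ := (M - s₀) * (N - t₀) with he₀def
  set k : ℕ := ⌈r⌉₊ with hkdef
  have he₀cast : (e₀ : ℝ) = ((M:ℝ) - s₀) * ((N:ℝ) - t₀) := by
    rw [he₀def]
    push_cast [Nat.cast_sub hs₀M, Nat.cast_sub ht₀N]
    ring
  have he₀low : r + η * M * N ≤ (e₀ : ℝ) := by
    rw [he₀cast]
    have h1 : (1 - δr) * M ≤ (M:ℝ) - s₀ := by linarith
    have h2 : (1 - δc) * N ≤ (N:ℝ) - t₀ := by linarith
    have h3 : ((1 - δr) * M) * ((1 - δc) * N) ≤ ((M:ℝ) - s₀) * ((N:ℝ) - t₀) := by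
      apply mul_le_mul h1 h2 (by nlinarith) (by nlinarith)
    nlinarith
  have hkey : (k : ℝ) + M + N < (e₀ : ℝ) := by
    have hk1 : (k : ℝ) < r + 1 := Nat.ceil_lt_add_one hr0.le
    have h4N : 4 * (N:ℝ) ≤ η * M * N := by nlinarith
    have h4M : 4 * (M:ℝ) ≤ η * M * N := by nlinarith
    linarith
  have hnat : k + M + N < e₀ := by exact_mod_cast hkey
  have he₀MN : e₀ ≤ M * N := Nat.mul_le_mul (Nat.sub_le M s₀) (Nat.sub_le N t₀)
  have hkMN : k ≤ M * N := by
    rw [hkdef]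
    refine Nat.ceil_le.2 ?_
    rw [hr]
    push_cast
    nlinarith [mul_nonneg (mul_nonneg hδc0 (sub_nonneg.2 hδr1.le)) (mul_pos hMpos hNpos).le,
      mul_nonneg hδr0 (mul_pos hMpos hNpos).le, mul_nonneg hη.le (mul_pos hMpos hNpos).le]
  have hfrV : Module.finrank F (Matrix (Fin M) (Fin N) F) = M * N := by
    simp [Module.finrank_matrix]
  set q : ℕ := Fintype.card F with hqdef
  have hq2 : 2 ≤ q := Fintype.one_lt_card
  -- the bad set
  set B : Finset (Matrix (Fin M) (Fin N) F) :=
    univ.filter (fun X => X ≠ 0 ∧ ∃ S : Finset (Fin M), S.card ≤ s₀ ∧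
      ∃ T : Finset (Fin N), T.card ≤ t₀ ∧ ∀ i ∉ S, ∀ j ∉ T, X i j = 0) with hBdef
  have hB0 : (0 : Matrix (Fin M) (Fin N) F) ∉ B := by simp [hBdef]
  -- card of each slice
  have hA : ∀ S : Finset (Fin M), ∀ T : Finset (Fin N), S.card ≤ s₀ → T.card ≤ t₀ →
      (univ.filter (fun X : Matrix (Fin M) (Fin N) F => ∀ i ∉ S, ∀ j ∉ T, X i j = 0)).card
        ≤ q ^ (M * N - e₀) := by
    intro S T hS hT
    set A := univ.filter (fun X : Matrix (Fin M) (Fin N) F => ∀ i ∉ S, ∀ j ∉ T, X i j = 0)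
      with hAdef
    have hinj : Set.InjOn
        (fun X : Matrix (Fin M) (Fin N) F =>
          fun p : {p : Fin M × Fin N // p.1 ∈ S ∨ p.2 ∈ T} => X p.1.1 p.1.2) ↑A := by
      intro X hX Y hY hXY
      simp only [hAdef, coe_filter, Set.mem_setOf_eq] at hX hY
      ext i j
      by_cases h : i ∈ S ∨ j ∈ T
      · exact congrFun hXY ⟨(i, j), h⟩
      · push_neg at h
        rw [hX.2 i h.1 j h.2, hY.2 i h.1 j h.2]
    have h1 : A.card ≤ Fintype.card ({p : Fin M × Fin N // p.1 ∈ S ∨ p.2 ∈ T} → F) := by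
      rw [← Finset.card_univ]
      refine Finset.card_le_card_of_injOn _ (fun _ _ => mem_univ _) hinj
    rw [Fintype.card_fun] at h1
    have h2 : Fintype.card {p : Fin M × Fin N // p.1 ∈ S ∨ p.2 ∈ T} ≤ M * N - e₀ := by
      rw [Fintype.card_subtype]
      have heq : univ.filter (fun p : Fin M × Fin N => p.1 ∈ S ∨ p.2 ∈ T) = (Sᶜ ×ˢ Tᶜ)ᶜ := by
        ext p
        simp [not_and_or, not_not]
        tauto
      rw [heq, Finset.card_compl, Finset.card_product, Finset.card_compl, Finset.card_compl]
      simp only [Fintype.card_prod, Fintype.card_fin]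
      have h3 : e₀ ≤ (M - S.card) * (N - T.card) :=
        Nat.mul_le_mul (Nat.sub_le_sub_left hS M) (Nat.sub_le_sub_left hT N)
      omega
    calc A.card ≤ q ^ Fintype.card {p : Fin M × Fin N // p.1 ∈ S ∨ p.2 ∈ T} := h1
      _ ≤ q ^ (M * N - e₀) := Nat.pow_le_pow_right (by omega) h2
  -- union bound
  set P : Finset (Finset (Fin M) × Finset (Fin N)) :=
    ((univ : Finset (Fin M)).powerset.filter (fun S => S.card ≤ s₀)) ×ˢ
      ((univ : Finset (Fin N)).powerset.filter (fun T => T.card ≤ t₀)) with hPdef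
  have hBsub : B ⊆ P.biUnion (fun ST =>
      univ.filter (fun X : Matrix (Fin M) (Fin N) F =>
        ∀ i ∉ ST.1, ∀ j ∉ ST.2, X i j = 0)) := by
    intro X hX
    rw [hBdef, mem_filter] at hX
    obtain ⟨-, -, S, hS, T, hT, hvanish⟩ := hX
    refine Finset.mem_biUnion.2 ⟨⟨S, T⟩, ?_, ?_⟩
    · simp [hPdef, hS, hT]
    · simp only [mem_filter, mem_univ, true_and]
      exact hvanish
  have hPcard : P.card ≤ 2 ^ M * 2 ^ N := by
    rw [hPdef, Finset.card_product]
    refine Nat.mul_le_mul ?_ ?_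
    · calc _ ≤ (univ : Finset (Fin M)).powerset.card := Finset.card_filter_le _ _
        _ = 2 ^ M := by rw [Finset.card_powerset, Finset.card_univ, Fintype.card_fin]
    · calc _ ≤ (univ : Finset (Fin N)).powerset.card := Finset.card_filter_le _ _
        _ = 2 ^ N := by rw [Finset.card_powerset, Finset.card_univ, Fintype.card_fin]
  have hBcard : B.card ≤ 2 ^ M * 2 ^ N * q ^ (M * N - e₀) := by
    calc B.card ≤ _ := Finset.card_le_card hBsub
      _ ≤ ∑ ST ∈ P, (univ.filter (fun X : Matrix (Fin M) (Fin N) F =>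
            ∀ i ∉ ST.1, ∀ j ∉ ST.2, X i j = 0)).card := Finset.card_biUnion_le
      _ ≤ P.card * q ^ (M * N - e₀) := by
          rw [← smul_eq_mul]
          refine Finset.sum_le_card_nsmul P _ _ ?_
          intro ST hST
          rw [hPdef, mem_product, mem_filter, mem_filter] at hST
          exact hA ST.1 ST.2 hST.1.2 hST.2.2
      _ ≤ 2 ^ M * 2 ^ N * q ^ (M * N - e₀) := Nat.mul_le_mul_right _ hPcard
  have hcard : B.card * q ^ k < Fintype.card (Matrix (Fin M) (Fin N) F) := by
    have hcV : Fintype.card (Matrix (Fin M) (Fin N) F) = q ^ (M * N) := by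
      rw [Module.card_eq_pow_finrank (K := F), hfrV]
    calc B.card * q ^ k ≤ (2 ^ M * 2 ^ N * q ^ (M * N - e₀)) * q ^ k :=
          Nat.mul_le_mul_right _ hBcard
      _ ≤ (q ^ M * q ^ N * q ^ (M * N - e₀)) * q ^ k := by
          refine Nat.mul_le_mul_right _ (Nat.mul_le_mul_right _ ?_)
          exact Nat.mul_le_mul (Nat.pow_le_pow_left hq2 M) (Nat.pow_le_pow_left hq2 N)
      _ = q ^ (M + N + (M * N - e₀) + k) := by rw [← pow_add, ← pow_add, ← pow_add]
      _ < q ^ (M * N) := Nat.pow_lt_pow_right (by omega) (by omega)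
      _ = Fintype.card (Matrix (Fin M) (Fin N) F) := hcV.symm
  obtain ⟨W, hWk, hWB⟩ := avoid_lemma F (Matrix (Fin M) (Fin N) F) B hB0 k
    (by rw [hfrV]; exact hkMN) hcard
  refine ⟨W, ?_, ?_⟩
  · calc ((1 - δr) * (1 - δc) - η) * M * N = r := rfl
      _ ≤ (k : ℝ) := Nat.le_ceil r
      _ ≤ (Module.finrank F W : ℝ) := by exact_mod_cast hWk
  · intro S hS T hT X hXW hX0
    by_contra h
    push_neg at h
    refine hWB X ?_ hXW
    rw [hBdef, mem_filter]
    exact ⟨mem_univ X, hX0, S, Nat.le_floor hS, T, Nat.le_floor hT, h⟩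
end

section
/- Let Ext : [N] × [D] → [M] be a strong (log₂ N − Δ, ν)-extractor, let S ⊆ [N] with |S| ≥ N/2^Δ, and let ε₁, ε₂, ε₃ > 0 satisfy ε₁ε₂ε₃ ≥ 2ν. Then for all but at most an ε₁ fraction of seeds z ∈ [D], for all but at most an ε₂ fraction of indices i ∈ [M], the set S_i^z := {x ∈ [N] : Ext(x, z) = i} satisfies |S_i^z ∩ S| ∈ [(1−ε₃)|S|/M, (1+ε₃)|S|/M]. -/
/-!
Feed the extractor the uniform distribution on `S`: its min-entropy is `log |S| ≥ log N - Δ`,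
and the mass it gives to `S_i^z` is `|S_i^z ∩ S| / |S|`. An index `i` that is bad for the seed
`z` contributes more than `ε₃ / (DM)` to the statistical-distance sum, so a seed with more than
`ε₂ M` bad indices contributes more than `ε₂ ε₃ / D`. Since the total is at most
`2ν ≤ ε₁ ε₂ ε₃`, Markov's inequality leaves at most `ε₁ D` such seeds.
-/

open Finset

section UniformDensity

variable {α : Type*} [DecidableEq α]

noncomputable def uniformDensity (S : Finset α) (x : α) : ℝ := if x ∈ S then (#S : ℝ)⁻¹ else 0

lemma uniformDensity_nonneg (S : Finset α) (x : α) : 0 ≤ uniformDensity S x := by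
  unfold uniformDensity; split_ifs <;> positivity

lemma sum_filter_uniformDensity [Fintype α] (S : Finset α) (P : α → Prop) [DecidablePred P] :
    ∑ x ∈ univ.filter P, uniformDensity S x = #(S.filter P) / #S := by
  simp only [uniformDensity, sum_ite_mem, sum_const, nsmul_eq_mul, div_eq_mul_inv]
  congr 3
  ext x
  simp [and_comm]

lemma sum_uniformDensity [Fintype α] {S : Finset α} (hS : S.Nonempty) :
    ∑ x, uniformDensity S x = 1 := by
  have hS' : (#S : ℝ) ≠ 0 := Nat.cast_ne_zero.mpr hS.card_pos.ne'
  simpa [div_self hS'] using sum_filter_uniformDensity S (fun _ => True)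

lemma uniformDensity_le {S : Finset α} {c : ℝ} (hS : 0 < #S) (hc : (#S : ℝ)⁻¹ ≤ c) (x : α) :
    uniformDensity S x ≤ c := by
  unfold uniformDensity
  split_ifs
  · exact hc
  · exact (inv_pos.mpr (Nat.cast_pos.mpr hS)).le.trans hc

end UniformDensity

lemma ncard_mul_le_sum {α : Type*} [Fintype α] {f : α → ℝ} (hf : ∀ x, 0 ≤ f x) {s : Set α}
    {c : ℝ} (h : ∀ x ∈ s, c ≤ f x) : s.ncard * c ≤ ∑ x, f x := by
  classical
  rw [Set.ncard_eq_toFinset_card', ← nsmul_eq_mul]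
  refine (card_nsmul_le_sum _ f c fun x hx => h x (by simpa using hx)).trans ?_
  exact sum_le_sum_of_subset_of_nonneg (subset_univ _) fun x _ _ => hf x

lemma abs_sub_le_mul_iff_mem_Icc {t a ε : ℝ} :
    |t - a| ≤ ε * a ↔ t ∈ Set.Icc ((1 - ε) * a) ((1 + ε) * a) := by
  rw [abs_sub_le_iff, Set.mem_Icc]
  constructor <;> rintro ⟨h₁, h₂⟩ <;> constructor <;> linarith

lemma div_le_abs_sub_of_notMem_Icc {t s D M ε : ℝ} (hs : 0 < s) (hD : 0 < D) (hM : 0 < M)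
    (h : t ∉ Set.Icc ((1 - ε) * s / M) ((1 + ε) * s / M)) :
    ε / (D * M) ≤ |t / s / D - 1 / (D * M)| := by
  rw [mul_div_assoc, mul_div_assoc, ← abs_sub_le_mul_iff_mem_Icc, not_le] at h
  have hsD : 0 < s * D := mul_pos hs hD
  calc ε / (D * M) = ε * (s / M) / (s * D) := by field_simp
    _ ≤ |t - s / M| / (s * D) := by gcongr
    _ = |(t - s / M) / (s * D)| := by rw [abs_div, abs_of_pos hsD]
    _ = |t / s / D - 1 / (D * M)| := by congr 1; field_simp

theorem stmt_10_general (N D M : ℕ) (hN : 0 < N) (hD : 0 < D) (hM : 0 < M)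
    (Ext : Fin N → Fin D → Fin M) (Δ ν : ℝ)
    (hExt : ∀ p : Fin N → ℝ, (∀ x, 0 ≤ p x) → (∑ x, p x) = 1 →
      (∀ x, p x ≤ (2 : ℝ) ^ Δ / N) →
      ∑ z : Fin D, ∑ i : Fin M,
        |(∑ x ∈ Finset.univ.filter (fun x => Ext x z = i), p x) / D -
          1 / ((D : ℝ) * M)| ≤ 2 * ν)
    (S : Finset (Fin N)) (hS : (N : ℝ) / (2 : ℝ) ^ Δ ≤ S.card)
    (ε₁ ε₂ ε₃ : ℝ) (hε₂ : 0 < ε₂) (hε₃ : 0 < ε₃)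
    (hprod : 2 * ν ≤ ε₁ * ε₂ * ε₃) :
    (({z : Fin D |
        ε₂ * M < (({i : Fin M |
          ¬ ((1 - ε₃) * S.card / M ≤ ((S.filter (fun x => Ext x z = i)).card : ℝ) ∧
             ((S.filter (fun x => Ext x z = i)).card : ℝ) ≤ (1 + ε₃) * S.card / M)} :
          Set (Fin M)).ncard : ℝ)} : Set (Fin D)).ncard : ℝ) ≤ ε₁ * D := by
  have hD' : (0 : ℝ) < D := Nat.cast_pos.mpr hD
  have hM' : (0 : ℝ) < M := Nat.cast_pos.mpr hM
  have h2Δ : (0 : ℝ) < 2 ^ Δ := Real.rpow_pos_of_pos two_pos Δ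
  have hs : (0 : ℝ) < #S := (div_pos (Nat.cast_pos.mpr hN) h2Δ).trans_le hS
  set dev : Fin D → Fin M → ℝ := fun z i =>
    |((S.filter (fun x => Ext x z = i)).card : ℝ) / #S / D - 1 / ((D : ℝ) * M)|
  have hdev_sum : ∑ z, ∑ i, dev z i ≤ 2 * ν := by
    have hdensity : (#S : ℝ)⁻¹ ≤ 2 ^ Δ / N := by
      rw [inv_le_comm₀ hs (div_pos h2Δ (Nat.cast_pos.mpr hN)), inv_div]
      exact hS
    simpa only [sum_filter_uniformDensity] using
      hExt (uniformDensity S) (uniformDensity_nonneg S)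
        (sum_uniformDensity (card_pos.mp (Nat.cast_pos.mp hs)))
        (uniformDensity_le (Nat.cast_pos.mp hs) hdensity)
  refine le_of_mul_le_mul_right ?_ (by positivity : 0 < ε₂ * ε₃ / D)
  calc _ ≤ ∑ z, ∑ i, dev z i :=
        ncard_mul_le_sum (fun z => sum_nonneg fun i _ => abs_nonneg _) fun z hz => ?_
    _ ≤ 2 * ν := hdev_sum
    _ ≤ ε₁ * ε₂ * ε₃ := hprod
    _ = ε₁ * D * (ε₂ * ε₃ / D) := by field_simp
  calc ε₂ * ε₃ / D = ε₂ * M * (ε₃ / (D * M)) := by field_simp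
    _ ≤ _ * (ε₃ / (D * M)) := by gcongr; exact hz.le
    _ ≤ ∑ i, dev z i := ncard_mul_le_sum (fun i => abs_nonneg _)
          fun i hi => div_le_abs_sub_of_notMem_Icc hs hD' hM' hi

/-- Let `Ext : [N] × [D] → [M]` be a strong `(log₂ N − Δ, ν)`-extractor (expressed by the
statistical-distance condition over all probability distributions `p` on `[N]` with
min-entropy at least `log₂ N − Δ`, i.e. `p x ≤ 2^Δ/N` pointwise). Let `S ⊆ [N]` with
`|S| ≥ N/2^Δ`, and let `ε₁, ε₂, ε₃ > 0` with `ε₁ε₂ε₃ ≥ 2ν`. Then for all but at most an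
`ε₁` fraction of seeds `z`, for all but at most an `ε₂` fraction of indices `i`, the set
`S_i^z = Ext(·,z)⁻¹(i)` satisfies `|S_i^z ∩ S| ∈ [(1-ε₃)|S|/M, (1+ε₃)|S|/M]`. -/
theorem stmt_10 (N D M : ℕ) (hN : 0 < N) (hD : 0 < D) (hM : 0 < M)
    (Ext : Fin N → Fin D → Fin M) (Δ ν : ℝ) (hν : 0 ≤ ν)
    (hExt : ∀ p : Fin N → ℝ, (∀ x, 0 ≤ p x) → (∑ x, p x) = 1 →
      (∀ x, p x ≤ (2 : ℝ) ^ Δ / N) →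
      ∑ z : Fin D, ∑ i : Fin M,
        |(∑ x ∈ Finset.univ.filter (fun x => Ext x z = i), p x) / D -
          1 / ((D : ℝ) * M)| ≤ 2 * ν)
    (S : Finset (Fin N)) (hS : (N : ℝ) / (2 : ℝ) ^ Δ ≤ S.card)
    (ε₁ ε₂ ε₃ : ℝ) (hε₁ : 0 < ε₁) (hε₂ : 0 < ε₂) (hε₃ : 0 < ε₃)
    (hprod : 2 * ν ≤ ε₁ * ε₂ * ε₃) :
    (({z : Fin D |
        ε₂ * M < (({i : Fin M |
          ¬ ((1 - ε₃) * S.card / M ≤ ((S.filter (fun x => Ext x z = i)).card : ℝ) ∧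
             ((S.filter (fun x => Ext x z = i)).card : ℝ) ≤ (1 + ε₃) * S.card / M)} :
          Set (Fin M)).ncard : ℝ)} : Set (Fin D)).ncard : ℝ) ≤ ε₁ * D :=
  stmt_10_general N D M hN hD hM Ext Δ ν hExt S hS ε₁ ε₂ ε₃ hε₂ hε₃ hprod
end

section
/- Let C_out ⊆ F_Q^{M} (Q = q^ℓ) be an F_q-linear code correcting any erasure pattern leaving at least (1−δ_row)(1−η) fraction of symbols, and let {C_i}_{i∈[M]} be F_q-linear codes in F_q^N each of dimension ℓ. Suppose for given erasure sets S ⊆ [M], T ⊆ [N] with |S| ≤ δ_row·M and |T| ≤ δ_col·N, all but at most an η fraction of the indices i ∈ [M]\S have the property that C_i corrects erasure pattern T. Then the concatenated code {(Enc_i(c_i))_{i∈[M]} : c ∈ C_out} ⊆ F_q^{M×N} corrects the row-and-column erasure pattern (S, T): any codeword is determined by its entries in rows outside S and columns outside T. -/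
/-- Erasure correction of the concatenated code. Let `C_out ⊆ (F_q^ℓ)^M` be an
`F_q`-linear outer code that corrects any erasure pattern leaving at least a
`(1−δ_row)(1−η)` fraction of symbols, and let `Enc i : F_q^ℓ → F_q^N` be injective
linear inner encoders. Given erasure sets `S ⊆ [M]`, `T ⊆ [N]` with `|S| ≤ δ_row·M` and
`|T| ≤ δ_col·N`, if all but at most an `η` fraction of the indices `i ∉ S` are such that
the inner code `Enc i` corrects the erasure pattern `T`, then the concatenated code
corrects the row-and-column erasure pattern `(S, T)`: any codeword is determined by its
entries in rows outside `S` and columns outside `T`. -/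
theorem stmt_17 (F : Type*) [Field F] [Fintype F] (ℓ M N : ℕ)
    (δrow δcol η : ℝ) (hδr0 : 0 ≤ δrow) (hδr1 : δrow ≤ 1)
    (hδc0 : 0 ≤ δcol) (hη0 : 0 ≤ η) (hη1 : η ≤ 1)
    (Cout : Submodule F (Fin M → Fin ℓ → F))
    (hout : ∀ c ∈ Cout, ∀ c' ∈ Cout, ∀ U : Finset (Fin M),
      (1 - δrow) * (1 - η) * M ≤ (U.card : ℝ) → (∀ i ∈ U, c i = c' i) → c = c')
    (Enc : Fin M → (Fin ℓ → F) →ₗ[F] (Fin N → F))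
    (hEncInj : ∀ i, Function.Injective (Enc i))
    (S : Finset (Fin M)) (T : Finset (Fin N))
    (hS : (S.card : ℝ) ≤ δrow * M) (hT : (T.card : ℝ) ≤ δcol * N)
    (hgood : ((({i : Fin M | i ∉ S ∧
        ¬ (∀ v v' : Fin ℓ → F, (∀ j ∉ T, Enc i v j = Enc i v' j) → v = v')} :
        Set (Fin M)).ncard : ℝ) ≤
        η * (({i : Fin M | i ∉ S} : Set (Fin M)).ncard : ℝ))) :
    ∀ c ∈ Cout, ∀ c' ∈ Cout,
      (∀ i ∉ S, ∀ j ∉ T, Enc i (c i) j = Enc i (c' i) j) → c = c' := by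
  classical
  intro c hc c' hc' hagree
  set P : Fin M → Prop :=
    fun i => ∀ v v' : Fin ℓ → F, (∀ j ∉ T, Enc i v j = Enc i v' j) → v = v' with hP
  set U : Finset (Fin M) := Sᶜ.filter P with hU
  set B : Finset (Fin M) := Sᶜ.filter (fun i => ¬ P i) with hB
  have hsetB : ({i : Fin M | i ∉ S ∧ ¬ P i} : Set (Fin M)) = ↑B := by
    ext i; simp [hB]
  have hsetA : ({i : Fin M | i ∉ S} : Set (Fin M)) = ↑(Sᶜ) := by
    ext i; simp
  rw [hsetB, hsetA, Set.ncard_coe_finset, Set.ncard_coe_finset] at hgood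
  have hsplit : U.card + B.card = Sᶜ.card := by
    rw [hU, hB]; exact Finset.card_filter_add_card_filter_not _
  have hScard : (Sᶜ.card : ℝ) = M - S.card := by
    have := Finset.card_compl S
    rw [this]
    have hle : S.card ≤ M := by
      simpa using Finset.card_le_univ S
    simp only [Fintype.card_fin]
    exact Nat.cast_sub hle
  have hUcard : (1 - δrow) * (1 - η) * M ≤ (U.card : ℝ) := by
    have h1 : (U.card : ℝ) = (Sᶜ.card : ℝ) - B.card := by
      have : (U.card : ℝ) + B.card = Sᶜ.card := by exact_mod_cast hsplit
      linarith
    have h2 : (1 - δrow) * M ≤ (Sᶜ.card : ℝ) := by rw [hScard]; linarith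
    have h3 : (U.card : ℝ) ≥ (1 - η) * Sᶜ.card := by
      rw [h1]; nlinarith [hgood]
    nlinarith [Nat.cast_nonneg (α := ℝ) Sᶜ.card]
  refine hout c hc c' hc' U hUcard ?_
  intro i hi
  rw [hU, Finset.mem_filter, Finset.mem_compl] at hi
  exact hi.2 (c i) (c' i) (fun j hj => hagree i hi.1 j hj)
end
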